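/- Let C > 0 and σ > 0, let α > 1 be real, and let m, m' ∈ ℝ with |m − m'| ≤ C. Then the Rényi divergence of order α between the Gaussian measures N(m, C²σ²) and N(m', C²σ²) satisfies D_α(N(m, C²σ²) ‖ N(m', C²σ²)) ≤ α / (2σ²). That is, a Gaussian mechanism that adds noise of standard deviation Cσ to a statistic of ℓ2-sensitivity at most C satisfies (α, α/(2σ²))-Rényi differential privacy. -/

import Mathlib

/-! Writing `pₘ` for the density of `N(m, v)`, the Rényi integrand is `pₘ' (pₘ / pₘ')^α =
pₘ^α pₘ'^(1-α)`, and completing the square in the exponent turns this into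
`exp (α (α - 1) (m - m')² / (2v))` times the density of `N(αm + (1-α)m', v)`. Hence
`D_α(N(m, v) ‖ N(m', v)) = α (m - m')² / (2v)` exactly, and `(m - m')² ≤ C²` gives the bound. -/

open MeasureTheory ProbabilityTheory Real
open scoped NNReal ENNReal

/-- The Rényi divergence of order `α` between measures `μ` and `ν`,
`D_α(μ‖ν) = (1/(α−1)) · log ∫ (dμ/dν)^α dν`. -/
noncomputable def renyiDiv {Ω : Type*} [MeasurableSpace Ω] (α : ℝ) (μ ν : Measure Ω) : ℝ :=
  (α - 1)⁻¹ * Real.log (∫⁻ x, (μ.rnDeriv ν x) ^ α ∂ν).toReal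

section withDensity

variable {X : Type*} [MeasurableSpace X] {μ : Measure X} [SigmaFinite μ] {f g : X → ℝ≥0∞}

theorem rnDeriv_withDensity_withDensity_ae_eq_div (hf : Measurable f) (hg : Measurable g)
    (hg_ne_zero : ∀ᵐ x ∂μ, g x ≠ 0) (hg_ne_top : ∀ᵐ x ∂μ, g x ≠ ∞) :
    (μ.withDensity f).rnDeriv (μ.withDensity g) =ᵐ[μ.withDensity g] f / g := by
  have : SigmaFinite (μ.withDensity g) := SigmaFinite.withDensity_of_ne_top hg_ne_top
  have hfg : μ.withDensity f = (μ.withDensity g).withDensity (f / g) := by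
    rw [← withDensity_mul _ hg (hf.div hg)]
    refine withDensity_congr_ae ?_
    filter_upwards [hg_ne_zero, hg_ne_top] with x hx0 hxtop
    exact (ENNReal.mul_div_cancel hx0 hxtop).symm
  rw [hfg]
  exact Measure.rnDeriv_withDensity _ (hf.div hg)

theorem lintegral_rnDeriv_rpow_withDensity (hf : Measurable f) (hg : Measurable g)
    (hg_ne_zero : ∀ᵐ x ∂μ, g x ≠ 0) (hg_ne_top : ∀ᵐ x ∂μ, g x ≠ ∞) (p : ℝ) :
    ∫⁻ x, (μ.withDensity f).rnDeriv (μ.withDensity g) x ^ p ∂(μ.withDensity g)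
      = ∫⁻ x, g x * (f x / g x) ^ p ∂μ := by
  have h := rnDeriv_withDensity_withDensity_ae_eq_div hf hg hg_ne_zero hg_ne_top
  rw [lintegral_congr_ae (h.mono fun x hx => by rw [hx]),
    lintegral_withDensity_eq_lintegral_mul _ hg ((hf.div hg).pow_const p)]
  rfl

end withDensity

section gaussian

variable {v : ℝ≥0}

theorem gaussianPDFReal_rpow_mul_rpow (α m m' x : ℝ) :
    gaussianPDFReal m v x ^ α * gaussianPDFReal m' v x ^ (1 - α)
      = exp (α * (α - 1) * (m - m') ^ 2 / (2 * v)) *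
        gaussianPDFReal (α * m + (1 - α) * m') v x := by
  unfold gaussianPDFReal
  set c := (√(2 * π * v))⁻¹
  have hc : 0 ≤ c := by positivity
  rw [mul_rpow hc (exp_nonneg _), mul_rpow hc (exp_nonneg _), ← exp_mul, ← exp_mul]
  calc c ^ α * exp (-(x - m) ^ 2 / (2 * v) * α) *
        (c ^ (1 - α) * exp (-(x - m') ^ 2 / (2 * v) * (1 - α)))
      = (c ^ α * c ^ (1 - α)) * exp (-(x - m) ^ 2 / (2 * v) * α
          + -(x - m') ^ 2 / (2 * v) * (1 - α)) := by rw [exp_add]; ring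
    _ = c * exp (α * (α - 1) * (m - m') ^ 2 / (2 * v)
          + -(x - (α * m + (1 - α) * m')) ^ 2 / (2 * v)) := by
      rw [← rpow_add' hc (by rw [add_sub_cancel]; exact one_ne_zero), add_sub_cancel, rpow_one]
      ring_nf
    _ = _ := by rw [exp_add]; ring

theorem lintegral_rnDeriv_rpow_gaussianReal (hv : v ≠ 0) (α m m' : ℝ) :
    ∫⁻ x, (gaussianReal m v).rnDeriv (gaussianReal m' v) x ^ α ∂(gaussianReal m' v)
      = ENNReal.ofReal (exp (α * (α - 1) * (m - m') ^ 2 / (2 * v))) := by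
  have hg_pos x := gaussianPDFReal_pos m' v x hv
  have hpt : ∀ x, gaussianPDF m' v x * (gaussianPDF m v x / gaussianPDF m' v x) ^ α
      = ENNReal.ofReal (exp (α * (α - 1) * (m - m') ^ 2 / (2 * v)))
        * gaussianPDF (α * m + (1 - α) * m') v x := by
    intro x
    simp only [gaussianPDF]
    rw [← ENNReal.ofReal_div_of_pos (hg_pos x),
      ENNReal.ofReal_rpow_of_pos (div_pos (gaussianPDFReal_pos m v x hv) (hg_pos x)),
      ← ENNReal.ofReal_mul (hg_pos x).le, ← ENNReal.ofReal_mul (exp_nonneg _),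
      ← gaussianPDFReal_rpow_mul_rpow, div_rpow (gaussianPDFReal_nonneg _ _ _) (hg_pos x).le,
      rpow_sub (hg_pos x), rpow_one]
    congr 1
    field_simp
  rw [gaussianReal_of_var_ne_zero m hv, gaussianReal_of_var_ne_zero m' hv,
    lintegral_rnDeriv_rpow_withDensity (measurable_gaussianPDF m v) (measurable_gaussianPDF m' v)
      (.of_forall fun x => (gaussianPDF_pos m' hv x).ne') (.of_forall fun _ => gaussianPDF_ne_top),
    lintegral_congr hpt, lintegral_const_mul _ (measurable_gaussianPDF _ _),
    lintegral_gaussianPDF_eq_one _ hv, mul_one]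

theorem renyiDiv_gaussianReal (hv : v ≠ 0) {α : ℝ} (hα : α ≠ 1) (m m' : ℝ) :
    renyiDiv α (gaussianReal m v) (gaussianReal m' v) = α * (m - m') ^ 2 / (2 * v) := by
  have hα' : α - 1 ≠ 0 := sub_ne_zero.mpr hα
  rw [renyiDiv, lintegral_rnDeriv_rpow_gaussianReal hv, ENNReal.toReal_ofReal (exp_nonneg _),
    log_exp]
  field_simp

end gaussian

/-- **Per-step RDP guarantee of the Gaussian mechanism.** If `|m − m'| ≤ C`, then
`D_α(N(m, C²σ²) ‖ N(m', C²σ²)) ≤ α / (2σ²)`. -/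
theorem gaussian_mechanism_rdp (C σ : ℝ) (hC : 0 < C) (hσ : 0 < σ) (α : ℝ) (hα : 1 < α)
    (m m' : ℝ) (h : |m - m'| ≤ C) :
    renyiDiv α (gaussianReal m ⟨C ^ 2 * σ ^ 2, by positivity⟩)
        (gaussianReal m' ⟨C ^ 2 * σ ^ 2, by positivity⟩)
      ≤ α / (2 * σ ^ 2) := by
  have hv : (⟨C ^ 2 * σ ^ 2, by positivity⟩ : ℝ≥0) ≠ 0 :=
    ne_of_gt (show (0 : ℝ) < C ^ 2 * σ ^ 2 by positivity)
  have hdist : (m - m') ^ 2 ≤ C ^ 2 := sq_le_sq.mpr (h.trans (le_abs_self C))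
  rw [renyiDiv_gaussianReal hv hα.ne' m m']
  calc α * (m - m') ^ 2 / (2 * (C ^ 2 * σ ^ 2))
      ≤ α * C ^ 2 / (2 * (C ^ 2 * σ ^ 2)) := by gcongr
    _ = α / (2 * σ ^ 2) := by field_simp
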